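/- Let n_i, n_k ∈ ℝ³ be unit vectors, let θ, t ∈ ℝ, and let R⁰ ∈ SO(3). Then tr(exp(−tθ n̂_i) · R⁰ · exp(tθ n̂_k) · n̂_k) = tr(−(1/2) n̂_i R⁰ n̂_k² − (1/2) n̂_i² R⁰ n̂_k) + tr(R⁰ n̂_k² + n̂_i² R⁰ n̂_k²) sin(θt) + tr(R⁰ n̂_k + n̂_i² R⁰ n̂_k) cos(θt) + tr(−(1/2) n̂_i R⁰ n̂_k − (1/2) n̂_i² R⁰ n̂_k²) sin(2θt) + tr((1/2) n̂_i R⁰ n̂_k² − (1/2) n̂_i² R⁰ n̂_k) cos(2θt). -/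

import Mathlib

/-!
For a unit vector `n`, the hat matrix `A = n̂` satisfies `A³ = -A`, so the exponential series
of `s • A` splits into its odd part `sin s • A` and its even part `1 + (1 - cos s) • A²`
(Rodrigues' formula). Substituting this for both exponentials, expanding the product, and
using `n̂ₖ³ = -n̂ₖ`, `sin² + cos² = 1` and the double-angle formulas turns the trace into the
stated trigonometric polynomial in `θt`.
-/

open Matrix Real

noncomputable section

/-- `ℝ³` with the Euclidean norm. -/
abbrev E3 := EuclideanSpace ℝ (Fin 3)

/-- Hat map: the skew-symmetric matrix associated to a vector `x ∈ ℝ³`,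
with rows `(0, −x₃, x₂)`, `(x₃, 0, −x₁)`, `(−x₂, x₁, 0)`. -/
def hat (x : E3) : Matrix (Fin 3) (Fin 3) ℝ :=
  !![0, -x 2, x 1; x 2, 0, -x 0; -x 1, x 0, 0]

/-- Standard basis vectors `e_α` of `ℝ³`. -/
def e (α : Fin 3) : E3 := EuclideanSpace.single α 1

attribute [local instance] Matrix.normedAddCommGroup Matrix.normedSpace

/-- `SO(3)`: real 3×3 matrices with `RᵀR = I` and `det R = 1`. -/
def SO3 : Set (Matrix (Fin 3) (Fin 3) ℝ) := {R | Rᵀ * R = 1 ∧ R.det = 1}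

section Rodrigues

variable {𝔸 : Type*} [Ring 𝔸] [Algebra ℝ 𝔸] {A : 𝔸}

lemma pow_two_mul_add_one_of_pow_three_eq_neg (hA : A ^ 3 = -A) (k : ℕ) :
    A ^ (2 * k + 1) = (-1 : ℝ) ^ k • A := by
  induction k with
  | zero => simp
  | succ k ih =>
    rw [show 2 * (k + 1) + 1 = 2 + (2 * k + 1) by ring, pow_add, ih, mul_smul_comm,
      ← pow_succ, hA, smul_neg, ← neg_smul, pow_succ, mul_neg_one]

lemma pow_two_mul_add_two_of_pow_three_eq_neg (hA : A ^ 3 = -A) (k : ℕ) :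
    A ^ (2 * k + 2) = (-1 : ℝ) ^ k • A ^ 2 := by
  rw [pow_succ, pow_two_mul_add_one_of_pow_three_eq_neg hA, smul_mul_assoc, ← pow_two]

lemma hasSum_exp_odd_of_pow_three_eq_neg [TopologicalSpace 𝔸] [ContinuousSMul ℝ 𝔸]
    (hA : A ^ 3 = -A) (s : ℝ) :
    HasSum (fun k : ℕ => ((2 * k + 1).factorial : ℝ)⁻¹ • (s • A) ^ (2 * k + 1))
      (Real.sin s • A) := by
  refine ((Real.hasSum_sin s).smul_const A).congr_fun fun k => ?_
  rw [smul_pow, pow_two_mul_add_one_of_pow_three_eq_neg hA, smul_smul, smul_smul]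
  congr 1
  ring

lemma hasSum_exp_even_of_pow_three_eq_neg [TopologicalSpace 𝔸] [IsTopologicalRing 𝔸]
    [ContinuousSMul ℝ 𝔸] (hA : A ^ 3 = -A) (s : ℝ) :
    HasSum (fun k : ℕ => ((2 * k).factorial : ℝ)⁻¹ • (s • A) ^ (2 * k))
      (1 + (1 - Real.cos s) • A ^ 2) := by
  have hcos : HasSum (fun k : ℕ => -((-1 : ℝ) ^ (k + 1) * s ^ (2 * (k + 1)) /
      ((2 * (k + 1)).factorial : ℝ))) (1 - Real.cos s) := by
    have h := (hasSum_nat_add_iff' 1).mpr (Real.hasSum_cos s)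
    simpa using h.neg
  refine (hasSum_nat_add_iff' 1).mp ?_
  simp only [Finset.range_one, Finset.sum_singleton, mul_zero, Nat.factorial_zero, Nat.cast_one,
    inv_one, pow_zero, one_smul, add_sub_cancel_left]
  refine (hcos.smul_const (A ^ 2)).congr_fun fun k => ?_
  rw [show 2 * (k + 1) = 2 * k + 2 by ring, smul_pow,
    pow_two_mul_add_two_of_pow_three_eq_neg hA, smul_smul, smul_smul]
  congr 1
  ring

theorem exp_smul_of_pow_three_eq_neg [TopologicalSpace 𝔸] [IsTopologicalRing 𝔸]
    [ContinuousSMul ℝ 𝔸] [T2Space 𝔸] (hA : A ^ 3 = -A) (s : ℝ) :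
    NormedSpace.exp (s • A) = 1 + Real.sin s • A + (1 - Real.cos s) • A ^ 2 := by
  have h := HasSum.even_add_odd (f := fun n : ℕ => (n.factorial : ℝ)⁻¹ • (s • A) ^ n)
    (hasSum_exp_even_of_pow_three_eq_neg hA s) (hasSum_exp_odd_of_pow_three_eq_neg hA s)
  simp only [NormedSpace.exp_eq_tsum ℝ]
  rw [h.tsum_eq]
  abel

end Rodrigues

lemma hat_smul (c : ℝ) (x : E3) : hat (c • x) = c • hat x := by
  ext i j; fin_cases i <;> fin_cases j <;> simp [hat]

lemma hat_pow_three (x : E3) : hat x ^ 3 = -(‖x‖ ^ 2 • hat x) := by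
  rw [EuclideanSpace.real_norm_sq_eq]
  ext i j; fin_cases i <;> fin_cases j <;>
    simp [hat, pow_succ, Matrix.mul_apply, Fin.sum_univ_three] <;> ring

lemma hat_pow_three_of_norm_eq_one {x : E3} (hx : ‖x‖ = 1) : hat x ^ 3 = -hat x := by
  rw [hat_pow_three, hx, one_pow, one_smul]

theorem stmt14_general (ni nk : E3) (hni : ‖ni‖ = 1) (hnk : ‖nk‖ = 1) (θ t : ℝ)
    (R0 : Matrix (Fin 3) (Fin 3) ℝ) :
    (NormedSpace.exp (hat ((-(t * θ)) • ni)) * R0 *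
        NormedSpace.exp (hat ((t * θ) • nk)) * hat nk).trace =
      ((-(1/2 : ℝ)) • (hat ni * R0 * hat nk ^ 2)
          + (-(1/2 : ℝ)) • (hat ni ^ 2 * R0 * hat nk)).trace
      + (R0 * hat nk ^ 2 + hat ni ^ 2 * R0 * hat nk ^ 2).trace * Real.sin (θ * t)
      + (R0 * hat nk + hat ni ^ 2 * R0 * hat nk).trace * Real.cos (θ * t)
      + ((-(1/2 : ℝ)) • (hat ni * R0 * hat nk)
          + (-(1/2 : ℝ)) • (hat ni ^ 2 * R0 * hat nk ^ 2)).trace * Real.sin (2 * θ * t)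
      + ((1/2 : ℝ) • (hat ni * R0 * hat nk ^ 2)
          + (-(1/2 : ℝ)) • (hat ni ^ 2 * R0 * hat nk)).trace * Real.cos (2 * θ * t) := by
  have hk : hat nk * (hat nk * hat nk) = -hat nk := by
    rw [← mul_assoc, ← pow_two, ← pow_succ, hat_pow_three_of_norm_eq_one hnk]
  rw [hat_smul, hat_smul, exp_smul_of_pow_three_eq_neg (hat_pow_three_of_norm_eq_one hni),
    exp_smul_of_pow_three_eq_neg (hat_pow_three_of_norm_eq_one hnk), Real.sin_neg, Real.cos_neg,
    mul_assoc 2, Real.sin_two_mul, Real.cos_two_mul, mul_comm t θ]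
  simp only [pow_two, add_mul, mul_add, Matrix.smul_mul, Matrix.mul_smul, one_mul, mul_one,
    mul_assoc, hk, mul_neg, neg_mul, trace_add, trace_smul, trace_neg, smul_eq_mul, neg_smul]
  linear_combination (-(hat ni * (R0 * (hat nk * hat nk))).trace) * Real.sin_sq_add_cos_sq (θ * t)

/-- expansion of `tr(exp(−tθ n̂ᵢ) R⁰ exp(tθ n̂ₖ) n̂ₖ)` as a trigonometric
polynomial in `θt`. -/
theorem stmt14 (ni nk : E3) (hni : ‖ni‖ = 1) (hnk : ‖nk‖ = 1) (θ t : ℝ)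
    (R0 : Matrix (Fin 3) (Fin 3) ℝ) (hR0 : R0 ∈ SO3) :
    (NormedSpace.exp (hat ((-(t * θ)) • ni)) * R0 *
        NormedSpace.exp (hat ((t * θ) • nk)) * hat nk).trace =
      ((-(1/2 : ℝ)) • (hat ni * R0 * hat nk ^ 2)
          + (-(1/2 : ℝ)) • (hat ni ^ 2 * R0 * hat nk)).trace
      + (R0 * hat nk ^ 2 + hat ni ^ 2 * R0 * hat nk ^ 2).trace * Real.sin (θ * t)
      + (R0 * hat nk + hat ni ^ 2 * R0 * hat nk).trace * Real.cos (θ * t)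
      + ((-(1/2 : ℝ)) • (hat ni * R0 * hat nk)
          + (-(1/2 : ℝ)) • (hat ni ^ 2 * R0 * hat nk ^ 2)).trace * Real.sin (2 * θ * t)
      + ((1/2 : ℝ) • (hat ni * R0 * hat nk ^ 2)
          + (-(1/2 : ℝ)) • (hat ni ^ 2 * R0 * hat nk)).trace * Real.cos (2 * θ * t) :=
  stmt14_general ni nk hni hnk θ t R0
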